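/- arXiv:1911.01924 — 2 statements merged into one kernel-verified Lean document; each statement's English description precedes it below -/
import Mathlib

section
/- Let p, q and r be distinct primes and let G be a finite group lying in 𝔄_p𝔄_q𝔄_r. Then there exist a finite group X lying in 𝔄_p𝔄_q𝔄_r with trivial center and an abelian group Z such that G is isomorphic to X × Z. Moreover, if X and X₁ are finite groups lying in 𝔄_p𝔄_q𝔄_r with trivial center, and Z and Z₁ are abelian groups, and G is isomorphic both to X × Z and to X₁ × Z₁, then X is isomorphic to X₁ and Z is isomorphic to Z₁. -/
/-- A group is abelian of exponent dividing `p`. -/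
def ElemAbelian (p : ℕ) (G : Type*) [Group G] : Prop :=
  (∀ a b : G, a * b = b * a) ∧ ∀ a : G, a ^ p = 1

/-- `G` lies in the product variety `𝔄_p𝔄_q`: there is a normal subgroup `N` that is
abelian of exponent dividing `p` such that `G/N` is abelian of exponent dividing `q`
(expressed by: all commutators and all `q`-th powers lie in `N`). -/
def InApAq (p q : ℕ) (G : Type*) [Group G] : Prop :=
  ∃ N : Subgroup G, N.Normal ∧ ElemAbelian p N ∧
    (∀ a b : G, a * b * a⁻¹ * b⁻¹ ∈ N) ∧ ∀ a : G, a ^ q ∈ N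

/-- `G` lies in `𝔄_p𝔄_q𝔄_r`: there is a normal subgroup `N`, abelian of exponent
dividing `p`, with `G/N ∈ 𝔄_q𝔄_r`. -/
def InApAqAr (p q r : ℕ) (G : Type*) [Group G] : Prop :=
  ∃ N : Subgroup G, ∃ _ : N.Normal, ElemAbelian p N ∧ InApAq q r (G ⧸ N)

/-- A Sylow `p`-subgroup: a `p`-subgroup whose index is coprime to `p`. -/
def IsSylow' (p : ℕ) {G : Type*} [Group G] (P : Subgroup G) : Prop :=
  IsPGroup p P ∧ Nat.Coprime P.index p

/-! The heart of the matter is that `Z(G) ∩ G' = 1`. If `y` is central and lies in `G'`, the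
transfer of `G` into an abelian subgroup `H` of finite index sends `y` to `y ^ [G : H]` and kills
`G'`, so `y ^ [G : H] = 1`. Taking `H = N` in `G` and `H = M` in `G/N`, where `N` and `M` come from
the definition of `𝔄_p𝔄_q𝔄_r`, and using that `G'` maps into `M`, the order of `y` is prime to
`p`, `q` and `r`, while it divides the exponent `rqp`.

As `rqp` is squarefree, the abelianisation of `G` is a semisimple `ℤ/rqp`-module, so the image of
`Z(G)` has a complement there; its preimage `W` is a complement of `Z(G)` in `G`. Hence
`G ≅ W × Z(G)`, with `W` centreless and in the variety. Conversely, whenever `G ≅ X × Z` with `X`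
centreless and `Z` abelian, `Z ≅ Z(G)` and `X ≅ G/Z(G)`, which gives uniqueness. -/

open Subgroup

theorem AddSubgroup.exists_isCompl_of_nsmul_eq_zero {M : Type*} [AddCommGroup M] {n : ℕ}
    (hn : Squarefree n) (h : ∀ a : M, n • a = 0) (B : AddSubgroup M) :
    ∃ C : AddSubgroup M, IsCompl B C := by
  let _ : Module (ZMod n) M := AddCommGroup.zmodModule h
  have : NeZero n := ⟨hn.ne_zero⟩
  have : Fact (Squarefree n) := ⟨hn⟩
  have := IsArtinianRing.isSemisimpleRing_of_isReduced (ZMod n)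
  obtain ⟨C, hC⟩ := (IsSemisimpleModule.toComplementedLattice (R := ZMod n) (M := M)).exists_isCompl
    (AddSubgroup.toZModSubmodule n B)
  exact ⟨(AddSubgroup.toZModSubmodule n).symm C,
    by simpa using (AddSubgroup.toZModSubmodule n).symm.isCompl_iff.mp hC⟩

theorem Subgroup.exists_isCompl_of_pow_eq_one {M : Type*} [CommGroup M] {n : ℕ}
    (hn : Squarefree n) (h : ∀ a : M, a ^ n = 1) (B : Subgroup M) :
    ∃ C : Subgroup M, IsCompl B C := by
  obtain ⟨C, hC⟩ := AddSubgroup.exists_isCompl_of_nsmul_eq_zero hn h B.toAddSubgroup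
  exact ⟨toAddSubgroup.symm C, by simpa using toAddSubgroup.symm.isCompl_iff.mp hC⟩

variable {p q r : ℕ} {G G' : Type*} [Group G] [Group G']

namespace Subgroup

theorem map_center_le_center {f : G →* G'} (hf : Function.Surjective f) :
    (center G).map f ≤ center G' := by
  rintro - ⟨z, hz, rfl⟩
  refine mem_center_iff.mpr fun b => ?_
  obtain ⟨a, rfl⟩ := hf b
  rw [← map_mul, ← map_mul, mem_center_iff.mp hz a]

theorem map_commutator_of_surjective {f : G →* G'} (hf : Function.Surjective f) :
    (_root_.commutator G).map f = _root_.commutator G' := by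
  rw [map_commutator_eq, MonoidHom.range_eq_top.mpr hf, _root_.commutator_def]

theorem map_equiv_center (e : G ≃* G') : (center G).map e.toMonoidHom = center G' := by
  ext b
  rw [mem_map_equiv]
  exact MulEquivClass.apply_mem_center_iff e.symm

theorem center_prod_of_center_eq_bot {Z : Type*} [CommGroup Z] (hG : center G = ⊥) :
    center (G × Z) = (⊥ : Subgroup G).prod ⊤ := by
  rw [Subgroup.center_prod, hG, center_eq_top]

theorem center_eq_bot_of_isCompl_center {W : Subgroup G} (h : IsCompl (center G) W) :
    center W = ⊥ := by
  refine eq_bot_iff.mpr fun x hx => mem_bot.mpr (Subtype.ext ?_)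
  have hcent : ⊤ ≤ centralizer {(x : G)} := h.sup_eq_top ▸ sup_le
    (fun z hz => mem_centralizer_singleton_iff.mpr (mem_center_iff.mp hz x).symm)
    (fun w hw => mem_centralizer_singleton_iff.mpr
      (congrArg Subtype.val (mem_center_iff.mp hx ⟨w, hw⟩)))
  have hxZ : (x : G) ∈ center G := mem_center_iff.mpr fun g =>
    mem_centralizer_singleton_iff.mp (hcent (mem_top g))
  exact disjoint_def.mp h.disjoint hxZ x.2

noncomputable def prodMulEquivOfIsCompl {H K : Subgroup G} (h : IsCompl H K)
    (hK : K ≤ center G) : H × K ≃* G :=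
  have hcomm (x : H) (y : K) : Commute (H.subtype x) (K.subtype y) :=
    mem_center_iff.mp (hK y.2) x
  MulEquiv.ofBijective (H.subtype.noncommCoprod K.subtype hcomm)
    ⟨(MonoidHom.noncommCoprod_injective _ _ _).mpr ⟨H.subtype_injective, K.subtype_injective,
        by simpa only [range_subtype] using h.disjoint⟩,
      MonoidHom.range_eq_top.mp <| by
        rw [MonoidHom.noncommCoprod_range, range_subtype, range_subtype, h.sup_eq_top]⟩

end Subgroup

theorem coprime_card_of_forall_pow_eq_one [Finite G] {n : ℕ} (hp : p.Prime) (hn : n.Coprime p)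
    (h : ∀ a : G, a ^ n = 1) : (Nat.card G).Coprime p := by
  have := Fact.mk hp
  refine Nat.coprime_comm.mp (hp.coprime_iff_not_dvd.mpr fun hdvd => ?_)
  obtain ⟨a, ha⟩ := exists_prime_orderOf_dvd_card' p hdvd
  exact hp.coprime_iff_not_dvd.mp hn.symm (ha ▸ orderOf_dvd_of_pow_eq_one (h a))

open scoped IsMulCommutative in
theorem pow_index_eq_one_of_mem_center_of_mem_commutator {H : Subgroup G} [H.FiniteIndex]
    [IsMulCommutative H] {y : G} (hy : y ∈ center G) (hy' : y ∈ _root_.commutator G) :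
    y ^ H.index = 1 := by
  have key := MonoidHom.transfer_eq_pow (MonoidHom.id H) y fun k g _ => by
    rw [mul_assoc, ← mem_center_iff.mp (pow_mem hy k) g, inv_mul_cancel_left]
  rw [Abelianization.commutator_subset_ker _ hy'] at key
  exact congrArg Subtype.val key.symm

theorem exists_isCompl_center_of_disjoint_commutator {n : ℕ} (hn : Squarefree n)
    (h : ∀ a : G, a ^ n = 1) (hG : Disjoint (center G) (_root_.commutator G)) :
    ∃ W : Subgroup G, IsCompl (center G) W := by
  have hexp (x : Abelianization G) : x ^ n = 1 := by
    obtain ⟨a, rfl⟩ := Quot.exists_rep x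
    rw [Abelianization.mk_eq_of, ← map_pow, h, map_one]
  obtain ⟨C, hC⟩ := exists_isCompl_of_pow_eq_one hn hexp ((center G).map Abelianization.of)
  refine ⟨C.comap Abelianization.of, disjoint_def.mpr fun {x} hxZ hxW => ?_, ?_⟩
  · have hx : Abelianization.of x = 1 := disjoint_def.mp hC.disjoint (mem_map_of_mem _ hxZ) hxW
    exact disjoint_def.mp hG hxZ (Abelianization.ker_of (G := G) ▸ hx)
  · refine codisjoint_iff.mpr (eq_top_iff' _ |>.mpr fun g => ?_)
    obtain ⟨-, ⟨z, hz, rfl⟩, c, hc, hzc⟩ :=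
      mem_sup.mp (hC.sup_eq_top ▸ mem_top (Abelianization.of g))
    have hw : z⁻¹ * g ∈ C.comap Abelianization.of := by
      rwa [mem_comap, map_mul, map_inv, ← hzc, inv_mul_cancel_left]
    exact mul_inv_cancel_left z g ▸ mul_mem_sup hz hw

noncomputable def centerMulEquivOfMulEquivProd {X Z : Type*} [Group X] [CommGroup Z]
    (hX : center X = ⊥) (e : G ≃* X × Z) : center G ≃* Z :=
  (centerCongr e).trans <| (MulEquiv.subgroupCongr (center_prod_of_center_eq_bot hX)).trans <|
    (prodEquiv ⊥ ⊤).trans <| MulEquiv.uniqueProd.trans topEquiv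

noncomputable def quotientCenterMulEquivOfMulEquivProd {X Z : Type*} [Group X] [CommGroup Z]
    (hX : center X = ⊥) (e : G ≃* X × Z) : G ⧸ center G ≃* X :=
  (QuotientGroup.congr _ _ e (map_equiv_center e)).trans <|
    (QuotientGroup.quotientMulEquivOfEq
      ((center_prod_of_center_eq_bot hX).trans MonoidHom.ker_fst.symm)).trans <|
    QuotientGroup.quotientKerEquivOfSurjective (MonoidHom.fst X Z) Prod.fst_surjective

namespace ElemAbelian

theorem pow_eq_one_of_mem {N : Subgroup G} (h : ElemAbelian p N) {a : G} (ha : a ∈ N) :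
    a ^ p = 1 :=
  congrArg Subtype.val (h.2 ⟨a, ha⟩)

theorem pow_mul_eq_one {N : Subgroup G} [N.Normal] (h : ElemAbelian p N) {a : G} {k : ℕ}
    (ha : (a : G ⧸ N) ^ k = 1) : a ^ (k * p) = 1 := by
  rw [pow_mul]
  exact h.pow_eq_one_of_mem (by rwa [← QuotientGroup.eq_one_iff, QuotientGroup.mk_pow])

theorem isMulCommutative {N : Subgroup G} (h : ElemAbelian p N) : IsMulCommutative N :=
  ⟨⟨h.1⟩⟩

theorem of_injective (f : G →* G') (hf : Function.Injective f) (h : ElemAbelian p G') :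
    ElemAbelian p G :=
  ⟨fun a b => hf (by simpa using h.1 (f a) (f b)), fun a => hf (by simpa using h.2 (f a))⟩

theorem comap_of_injective (f : G →* G') (hf : Function.Injective f) {N : Subgroup G'}
    (h : ElemAbelian p N) : ElemAbelian p (N.comap f) :=
  h.of_injective (f.subgroupComap N) fun _ _ hab => Subtype.ext (hf (congrArg Subtype.val hab))

end ElemAbelian

theorem InApAq.of_injective (f : G →* G') (hf : Function.Injective f) (h : InApAq p q G') :
    InApAq p q G := by
  obtain ⟨N, hN, hNab, hcomm, hpow⟩ := h
  exact ⟨N.comap f, hN.comap f, hNab.comap_of_injective f hf,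
    fun a b => by simpa using hcomm (f a) (f b), fun a => by simpa using hpow (f a)⟩

namespace InApAqAr

theorem of_injective (f : G →* G') (hf : Function.Injective f) (h : InApAqAr p q r G') :
    InApAqAr p q r G := by
  obtain ⟨N, hN, hNab, hquot⟩ := h
  have hker : (QuotientGroup.map (N.comap f) N f le_rfl).ker = ⊥ := by
    rw [QuotientGroup.ker_map, QuotientGroup.map_mk'_self]
  exact ⟨N.comap f, hN.comap f, hNab.comap_of_injective f hf,
    hquot.of_injective _ ((MonoidHom.ker_eq_bot_iff _).mp hker)⟩

theorem pow_eq_one (h : InApAqAr p q r G) (a : G) : a ^ (r * q * p) = 1 := by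
  obtain ⟨N, hN, hNab, M, -, hMab, -, hpow⟩ := h
  exact hNab.pow_mul_eq_one (pow_mul (a : G ⧸ N) r q ▸ hMab.pow_eq_one_of_mem (hpow a))

theorem disjoint_center_commutator [Finite G] (hp : p.Prime) (hq : q.Prime)
    (hrqp : (r * q).Coprime p) (hrq : r.Coprime q) (hG : InApAqAr p q r G) :
    Disjoint (center G) (_root_.commutator G) := by
  obtain ⟨N, hN, hNab, M, hM, hMab, hMcomm, hMpow⟩ := hG
  have := hNab.isMulCommutative
  have := hMab.isMulCommutative
  have hNindex : N.index.Coprime p := by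
    refine index_eq_card N ▸ coprime_card_of_forall_pow_eq_one hp hrqp fun x => ?_
    exact pow_mul x r q ▸ hMab.pow_eq_one_of_mem (hMpow x)
  have hMindex : M.index.Coprime q := by
    refine index_eq_card M ▸ coprime_card_of_forall_pow_eq_one hq hrq fun x => ?_
    obtain ⟨x, rfl⟩ := QuotientGroup.mk_surjective x
    rw [← QuotientGroup.mk_pow, QuotientGroup.eq_one_iff]
    exact hMpow x
  have hcomm_le : _root_.commutator (G ⧸ N) ≤ M := by
    rw [_root_.commutator_def, commutator_le]
    exact fun a _ b _ => commutatorElement_def a b ▸ hMcomm a b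
  refine disjoint_def.mpr fun {y} hy hy' => ?_
  have hy_bar : (y : G ⧸ N) ∈ center (G ⧸ N) :=
    map_center_le_center (QuotientGroup.mk'_surjective N) (mem_map_of_mem (QuotientGroup.mk' N) hy)
  have hy_bar' : (y : G ⧸ N) ∈ _root_.commutator (G ⧸ N) :=
    map_commutator_of_surjective (QuotientGroup.mk'_surjective N) ▸
      mem_map_of_mem (QuotientGroup.mk' N) hy'
  have h_N : y ^ N.index = 1 := pow_index_eq_one_of_mem_center_of_mem_commutator hy hy'
  have h_M : y ^ (M.index * p) = 1 :=
    hNab.pow_mul_eq_one (pow_index_eq_one_of_mem_center_of_mem_commutator hy_bar hy_bar')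
  have h_qp : y ^ (q * p) = 1 :=
    hNab.pow_mul_eq_one (hMab.pow_eq_one_of_mem (hcomm_le hy_bar'))
  have hyp : (orderOf y).Coprime p := hNindex.coprime_dvd_left (orderOf_dvd_of_pow_eq_one h_N)
  rw [← orderOf_eq_one_iff]
  exact Nat.eq_one_of_dvd_coprimes hMindex.symm
    (hyp.dvd_of_dvd_mul_right (orderOf_dvd_of_pow_eq_one h_qp))
    (hyp.dvd_of_dvd_mul_right (orderOf_dvd_of_pow_eq_one h_M))

end InApAqAr

/-- Every finite `G ∈ 𝔄_p𝔄_q𝔄_r` is isomorphic to `X × Z` with `X` a finite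
group in `𝔄_p𝔄_q𝔄_r` having trivial centre and `Z` abelian; moreover `X` and `Z` are
determined up to isomorphism. -/
theorem direct_decomposition_in_ApAqAr (p q r : ℕ) (hp : p.Prime) (hq : q.Prime)
    (hr : r.Prime) (hpq : p ≠ q) (hpr : p ≠ r) (hqr : q ≠ r)
    (G : Type) [Group G] [Finite G] (hG : InApAqAr p q r G) :
    (∃ (X : Type) (_ : Group X) (Z : Type) (_ : CommGroup Z),
        Finite X ∧ InApAqAr p q r X ∧ Subgroup.center X = ⊥ ∧
        Nonempty (G ≃* X × Z)) ∧
    ∀ (X X₁ Z Z₁ : Type) (_ : Group X) (_ : Group X₁) (_ : CommGroup Z) (_ : CommGroup Z₁),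
      Finite X → Finite X₁ →
      InApAqAr p q r X → InApAqAr p q r X₁ →
      Subgroup.center X = ⊥ → Subgroup.center X₁ = ⊥ →
      Nonempty (G ≃* X × Z) → Nonempty (G ≃* X₁ × Z₁) →
      Nonempty (X ≃* X₁) ∧ Nonempty (Z ≃* Z₁) := by
  refine ⟨?_, fun X X₁ Z Z₁ _ _ _ _ _ _ _ _ hX hX₁ ⟨e⟩ ⟨e₁⟩ =>
    ⟨⟨(quotientCenterMulEquivOfMulEquivProd hX e).symm.trans
        (quotientCenterMulEquivOfMulEquivProd hX₁ e₁)⟩,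
      ⟨(centerMulEquivOfMulEquivProd hX e).symm.trans (centerMulEquivOfMulEquivProd hX₁ e₁)⟩⟩⟩
  have hrq : r.Coprime q := (Nat.coprime_primes hr hq).mpr hqr.symm
  have hrqp : (r * q).Coprime p := Nat.Coprime.mul_left
    ((Nat.coprime_primes hr hp).mpr hpr.symm) ((Nat.coprime_primes hq hp).mpr hpq.symm)
  have hsqfree : Squarefree (r * q * p) := Nat.squarefree_mul_iff.mpr
    ⟨hrqp, Nat.squarefree_mul_iff.mpr ⟨hrq, hr.squarefree, hq.squarefree⟩, hp.squarefree⟩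
  obtain ⟨W, hW⟩ := exists_isCompl_center_of_disjoint_commutator hsqfree hG.pow_eq_one
    (hG.disjoint_center_commutator hp hq hrqp hrq)
  open scoped IsMulCommutative in
  exact ⟨W, inferInstance, center G, inferInstance, inferInstance,
    hG.of_injective W.subtype W.subtype_injective, center_eq_bot_of_isCompl_center hW,
    ⟨(prodMulEquivOfIsCompl hW.symm le_rfl).symm⟩⟩
end

section
/- Let p and q be distinct primes and let G be a finite group whose order is of the form p^α q^β and whose Sylow p-subgroups and Sylow q-subgroups are all abelian of exponent dividing p and q respectively. Then there exist finite groups X and Y with X lying in 𝔄_p𝔄_q and Y lying in 𝔄_q𝔄_p such that G is isomorphic to X × Y. -/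
/-!
Take Sylow subgroups `P` and `Q`, so that `G = PQ` and `P ∩ Q = 1`. By Itô's theorem
`K = [P, Q]` is abelian; it is normal, and its `p`- and `q`-parts `A ≤ P` and `B ≤ Q` are normal
in `G` with `K = AB`. In `G/A` the image of `P` acts coprimely on the normal abelian image of `Q`,
so averaging over it splits that image as its centralizer times `[P, Q]A/A = BA/A`. Pulled back,
`Q = Q₀B` with `Q₀ ∩ B = 1` and `Q₀A/A` central in `G/A`. The preimage `M = AQ₀` of
`QA/A ∩ Z(G/A)` is normal and lies in `𝔄_p𝔄_q`; symmetrically `N = BP₀` lies in `𝔄_q𝔄_p`, and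
`M ∩ N = 1`, `MN = G`.
-/

open Subgroup
open scoped commutatorElement Pointwise

section ElemAbelian

variable {G G' : Type*} [Group G] [Group G'] {p : ℕ} {H K : Subgroup G}

theorem elemAbelian_subgroup_iff :
    ElemAbelian p H ↔ (∀ x ∈ H, ∀ y ∈ H, x * y = y * x) ∧ ∀ x ∈ H, x ^ p = 1 := by
  simp [ElemAbelian, Subtype.ext_iff]

theorem ElemAbelian.isMulCommutative_s18 (h : ElemAbelian p H) : IsMulCommutative H :=
  .of_setLike_mul_comm (elemAbelian_subgroup_iff.mp h).1

theorem ElemAbelian.pow_eq_one (h : ElemAbelian p H) {x : G} (hx : x ∈ H) : x ^ p = 1 :=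
  (elemAbelian_subgroup_iff.mp h).2 x hx

theorem ElemAbelian.mono (hK : ElemAbelian p K) (hHK : H ≤ K) : ElemAbelian p H := by
  rw [elemAbelian_subgroup_iff] at hK ⊢
  exact ⟨fun x hx y hy => hK.1 x (hHK hx) y (hHK hy), fun x hx => hK.2 x (hHK hx)⟩

theorem ElemAbelian.map (hH : ElemAbelian p H) (f : G →* G') : ElemAbelian p (H.map f) := by
  rw [elemAbelian_subgroup_iff] at hH ⊢
  refine ⟨?_, ?_⟩
  · rintro _ ⟨x, hx, rfl⟩ _ ⟨y, hy, rfl⟩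
    rw [← map_mul, hH.1 x hx y hy, map_mul]
  · rintro _ ⟨x, hx, rfl⟩
    rw [← map_pow, hH.2 x hx, map_one]

end ElemAbelian

theorem Subgroup.IsComplement'.mul_eq_univ {G : Type*} [Group G] {H K : Subgroup G}
    (h : IsComplement' H K) : (H : Set G) * (K : Set G) = Set.univ :=
  Set.eq_univ_of_forall fun g =>
    let ⟨⟨a, b⟩, hab⟩ := h.2 g
    Set.mem_mul.mpr ⟨a, a.2, b, b.2, hab⟩

section Ito

variable {G : Type*} [Group G] {P Q : Subgroup G}

theorem Subgroup.mul_eq_univ_comm (hPQ : (P : Set G) * (Q : Set G) = Set.univ) :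
    (Q : Set G) * (P : Set G) = Set.univ := by
  rw [← inv_coe_set (H := P), ← inv_coe_set (H := Q), ← mul_inv_rev, hPQ, Set.inv_univ]

theorem exists_conj_commutatorElement_eq_left [IsMulCommutative P]
    (hQP : (Q : Set G) * (P : Set G) = Set.univ) {a₁ : G} (ha₁ : a₁ ∈ P) (b : G) :
    ∃ b₂ ∈ Q, ∀ a ∈ P, a₁ * ⁅a, b⁆ * a₁⁻¹ = ⁅a, b₂⁆ := by
  obtain ⟨b₂, hb₂, a₂, ha₂, h⟩ := Set.mem_mul.mp (hQP ▸ Set.mem_univ (a₁ * b * a₁⁻¹))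
  refine ⟨b₂, hb₂, fun a ha => ?_⟩
  have hconj : a₁ * a * a₁⁻¹ = a := by rw [setLike_mul_comm ha₁ ha, mul_inv_cancel_right]
  have hcomm : ⁅a, a₂⁆ = 1 := commutatorElement_eq_one_iff_mul_comm.mpr (setLike_mul_comm ha ha₂)
  rw [conjugate_commutatorElement, hconj, ← h, commutatorElement_mul_right_eq_mul_conj, hcomm,
    mul_one, mul_inv_cancel_right]

theorem exists_conj_commutatorElement_eq_right [IsMulCommutative Q]
    (hPQ : (P : Set G) * (Q : Set G) = Set.univ) {b₁ : G} (hb₁ : b₁ ∈ Q) (a : G) :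
    ∃ a₂ ∈ P, ∀ b ∈ Q, b₁ * ⁅a, b⁆ * b₁⁻¹ = ⁅a₂, b⁆ := by
  obtain ⟨a₂, ha₂, h⟩ := exists_conj_commutatorElement_eq_left hPQ hb₁ a
  refine ⟨a₂, ha₂, fun b hb => ?_⟩
  rw [← commutatorElement_inv, ← commutatorElement_inv b, ← h b hb]
  group

theorem conj_mul_eq_conj_mul_of_mem_commutator [IsMulCommutative P] [IsMulCommutative Q]
    (hPQ : (P : Set G) * (Q : Set G) = Set.univ) {a b k : G} (ha : a ∈ P) (hb : b ∈ Q)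
    (hk : k ∈ ⁅P, Q⁆) : (a * b) * k * (a * b)⁻¹ = (b * a) * k * (b * a)⁻¹ := by
  suffices ⁅P, Q⁆ ≤ (MulAut.conj (a * b)).toMonoidHom.eqLocus (MulAut.conj (b * a)).toMonoidHom
    from this hk
  refine commutator_le.mpr fun x hx y hy => ?_
  obtain ⟨y', hy', hconj_a⟩ := exists_conj_commutatorElement_eq_left (mul_eq_univ_comm hPQ) ha y
  obtain ⟨x', hx', hconj_b⟩ := exists_conj_commutatorElement_eq_right hPQ hb x
  show (a * b) * ⁅x, y⁆ * (a * b)⁻¹ = (b * a) * ⁅x, y⁆ * (b * a)⁻¹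
  calc (a * b) * ⁅x, y⁆ * (a * b)⁻¹ = a * (b * ⁅x, y⁆ * b⁻¹) * a⁻¹ := by group
    _ = ⁅x', y'⁆ := by rw [hconj_b y hy, hconj_a x' hx']
    _ = b * (a * ⁅x, y⁆ * a⁻¹) * b⁻¹ := by rw [hconj_a x hx, hconj_b y' hy']
    _ = (b * a) * ⁅x, y⁆ * (b * a)⁻¹ := by group

/-- **Itô's theorem**. -/
theorem isMulCommutative_commutator_of_mul_eq_univ [IsMulCommutative P] [IsMulCommutative Q]
    (hPQ : (P : Set G) * (Q : Set G) = Set.univ) : IsMulCommutative (⁅P, Q⁆ : Subgroup G) := by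
  refine .of_setLike_mul_comm fun k hk k' hk' => ?_
  suffices ⁅P, Q⁆ ≤ centralizer {k} from (mem_centralizer_singleton_iff.mp (this hk')).symm
  refine commutator_le.mpr fun a ha b hb => mem_centralizer_singleton_iff.mpr ?_
  have h := conj_mul_eq_conj_mul_of_mem_commutator hPQ (inv_mem ha) (inv_mem hb) hk
  calc ⁅a, b⁆ * k = (b⁻¹ * a⁻¹)⁻¹ * ((a⁻¹ * b⁻¹) * k * (a⁻¹ * b⁻¹)⁻¹) * (a⁻¹ * b⁻¹) := by
        rw [commutatorElement_def]; group
    _ = (b⁻¹ * a⁻¹)⁻¹ * ((b⁻¹ * a⁻¹) * k * (b⁻¹ * a⁻¹)⁻¹) * (a⁻¹ * b⁻¹) := by rw [h]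
    _ = k * ⁅a, b⁆ := by rw [commutatorElement_def]; group

theorem commutator_normal_of_sup_eq_top (hPQ : P ⊔ Q = ⊤) : ⁅P, Q⁆.Normal := by
  rw [← normalizer_eq_top_iff, eq_top_iff, ← hPQ]
  exact sup_le (normalizer_commutator_ge_left P Q) (normalizer_commutator_ge_right P Q)

theorem commutator_top_left_le_of_mul_eq_univ [IsMulCommutative Q]
    (hPQ : (P : Set G) * (Q : Set G) = Set.univ) : ⁅(⊤ : Subgroup G), Q⁆ ≤ ⁅P, Q⁆ := by
  refine commutator_le.mpr fun g _ b hb => ?_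
  obtain ⟨a, ha, b', hb', rfl⟩ := Set.mem_mul.mp (hPQ ▸ Set.mem_univ g)
  rw [commutatorElement_mul_left_eq_conj_mul,
    commutatorElement_eq_one_iff_mul_comm.mpr (setLike_mul_comm hb' hb), mul_one,
    mul_inv_cancel, one_mul]
  exact commutator_mem_commutator ha hb

end Ito

namespace Subgroup

variable {G : Type*} [Group G] (K : Subgroup G) [IsMulCommutative K]

def torsionBy (n : ℕ) : Subgroup G where
  carrier := {x | x ∈ K ∧ x ^ n = 1}
  one_mem' := ⟨K.one_mem, one_pow n⟩
  mul_mem' := fun {x y} ⟨hx, hxn⟩ ⟨hy, hyn⟩ =>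
    ⟨K.mul_mem hx hy, by rw [Commute.mul_pow (setLike_mul_comm hx hy), hxn, hyn, one_mul]⟩
  inv_mem' := fun ⟨hx, hxn⟩ => ⟨K.inv_mem hx, by rw [inv_pow, hxn, inv_one]⟩

theorem torsionBy_le (n : ℕ) : K.torsionBy n ≤ K := fun _ hx => hx.1

variable {K}

instance normal_torsionBy [hK : K.Normal] (n : ℕ) : (K.torsionBy n).Normal :=
  ⟨fun _ ⟨hx, hxn⟩ g => ⟨hK.conj_mem _ hx g, by rw [conj_pow, hxn, mul_one, mul_inv_cancel]⟩⟩

theorem isPGroup_torsionBy (p k : ℕ) : IsPGroup p (K.torsionBy (p ^ k)) :=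
  fun x => ⟨k, Subtype.ext x.2.2⟩

theorem exists_mul_mem_torsionBy_of_coprime {m n : ℕ} (hmn : m.Coprime n)
    (hK : ∀ x ∈ K, x ^ (m * n) = 1) {x : G} (hx : x ∈ K) :
    ∃ a ∈ K.torsionBy m, ∃ b ∈ K.torsionBy n, a * b = x := by
  obtain ⟨u, v, huv⟩ := hmn.isCoprime
  have hpow (k : ℤ) : x ^ (k * (m * n : ℕ)) = 1 := by
    rw [mul_comm, zpow_mul, zpow_natCast, hK x hx, one_zpow]
  refine ⟨x ^ (v * n), ⟨zpow_mem hx _, ?_⟩, x ^ (u * m), ⟨zpow_mem hx _, ?_⟩, ?_⟩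
  · rw [← zpow_natCast, ← zpow_mul, ← hpow v]; push_cast; ring_nf
  · rw [← zpow_natCast, ← zpow_mul, ← hpow u]; push_cast; ring_nf
  · rw [← zpow_add, show v * n + u * m = (1 : ℤ) by linear_combination huv, zpow_one]

variable (K) in
theorem exists_normal_split_of_card_eq [Finite G] [K.Normal] {p q α β : ℕ} (hpq : p.Coprime q)
    (hG : Nat.card G = p ^ α * q ^ β) (P : Sylow p G) (Q : Sylow q G) :
    ∃ A B : Subgroup G, A.Normal ∧ B.Normal ∧ A ≤ K ⊓ P ∧ B ≤ K ⊓ Q ∧ K ≤ A ⊔ B := by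
  refine ⟨K.torsionBy (p ^ α), K.torsionBy (q ^ β), inferInstance, inferInstance,
    le_inf (K.torsionBy_le _) ((isPGroup_torsionBy p α).le_sylow_of_normal P),
    le_inf (K.torsionBy_le _) ((isPGroup_torsionBy q β).le_sylow_of_normal Q), fun x hx => ?_⟩
  obtain ⟨a, ha, b, hb, rfl⟩ :=
    exists_mul_mem_torsionBy_of_coprime (hpq.pow α β) (fun y _ => hG ▸ pow_card_eq_one') hx
  exact mul_mem_sup ha hb

end Subgroup

section CoprimeAction

open scoped IsMulCommutative

variable {H : Type*} [Group H] {S R : Subgroup H} [R.Normal] [IsMulCommutative R]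

variable (S R) in
noncomputable def conjNorm [Fintype S] : R →* R :=
  ∏ s : S, (MulAut.conjNormal (s : H)).toMonoidHom

section Fintype

variable [Fintype S]

theorem conjNorm_apply (z : R) : conjNorm S R z = ∏ s : S, MulAut.conjNormal (s : H) z :=
  MonoidHom.finsetProd_apply _ _ _

theorem conjNorm_conjNormal (s : S) (z : R) :
    conjNorm S R (MulAut.conjNormal (s : H) z) = conjNorm S R z := by
  simp only [conjNorm_apply, ← MulAut.mul_apply, ← map_mul, ← coe_mul]
  exact Fintype.prod_equiv (Equiv.mulRight s) _ _ fun _ => rfl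

theorem conjNormal_conjNorm (s : S) (z : R) :
    MulAut.conjNormal (s : H) (conjNorm S R z) = conjNorm S R z := by
  simp only [conjNorm_apply, map_prod, ← MulAut.mul_apply, ← map_mul, ← coe_mul]
  exact Fintype.prod_equiv (Equiv.mulLeft s) _ _ fun _ => rfl

theorem conjNorm_mem_centralizer (z : R) : (conjNorm S R z : H) ∈ centralizer (S : Set H) := by
  refine mem_centralizer_iff.mpr fun s hs => ?_
  have h := congrArg Subtype.val (conjNormal_conjNorm ⟨s, hs⟩ z)
  rw [MulAut.conjNormal_apply] at h
  exact mul_inv_eq_iff_eq_mul.mp h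

theorem conjNorm_eq_pow {z : R} (hz : (z : H) ∈ centralizer (S : Set H)) :
    conjNorm S R z = z ^ Fintype.card S := by
  rw [conjNorm_apply, ← Finset.card_univ, ← Finset.prod_const]
  refine Finset.prod_congr rfl fun s _ => Subtype.ext ?_
  rw [MulAut.conjNormal_apply, mem_centralizer_iff.mp hz s s.2, mul_inv_cancel_right]

theorem conjNorm_eq_one_of_mem_commutator {z : R} (hz : (z : H) ∈ ⁅S, R⁆) : conjNorm S R z = 1 := by
  suffices ⁅S, R⁆ ≤ (conjNorm S R).ker.map R.subtype by
    obtain ⟨w, hw, hwz⟩ := this hz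
    rwa [← Subtype.ext hwz]
  refine commutator_le.mpr fun s hs w hw => ⟨MulAut.conjNormal s ⟨w, hw⟩ * (⟨w, hw⟩ : R)⁻¹, ?_, ?_⟩
  · rw [SetLike.mem_coe, MonoidHom.mem_ker, map_mul, map_inv, conjNorm_conjNormal ⟨s, hs⟩,
      mul_inv_cancel]
  · simp [MulAut.conjNormal_apply, commutatorElement_def]

theorem conjNorm_mul_inv_pow_mem_commutator (z : R) :
    ((conjNorm S R z * (z ^ Fintype.card S)⁻¹ : R) : H) ∈ ⁅S, R⁆ := by
  rw [← mem_subgroupOf, conjNorm_apply, ← Finset.card_univ, ← Finset.prod_const,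
    ← Finset.prod_inv_distrib, ← Finset.prod_mul_distrib]
  refine prod_mem fun s _ => mem_subgroupOf.mpr ?_
  convert commutator_mem_commutator s.2 z.2 using 1
  simp [MulAut.conjNormal_apply, commutatorElement_def]

end Fintype

variable [Finite H] {r : ℕ} (hR : ∀ x ∈ R, x ^ r = 1) (hSr : (Nat.card S).Coprime r)
include hR hSr

theorem disjoint_centralizer_commutator_of_coprime :
    Disjoint (centralizer (S : Set H)) ⁅S, R⁆ := by
  have := Fintype.ofFinite S
  refine disjoint_def.mpr fun {z} hzS hzSR => ?_
  have hzR : z ∈ R := commutator_le_right S R hzSR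
  have hcard : z ^ Fintype.card S = 1 := congrArg Subtype.val
    ((conjNorm_eq_pow (z := ⟨z, hzR⟩) hzS).symm.trans (conjNorm_eq_one_of_mem_commutator hzSR))
  have := pow_gcd_eq_one.mpr ⟨hcard, hR z hzR⟩
  rwa [← Nat.card_eq_fintype_card, hSr.gcd_eq_one, pow_one] at this

theorem exists_centralizer_mul_commutator_eq_of_coprime {z : H} (hz : z ∈ R) :
    ∃ c ∈ R ⊓ centralizer (S : Set H), ∃ t ∈ ⁅S, R⁆, c * t = z := by
  have := Fintype.ofFinite S
  -- with `u * |S| + v * r = 1`, `z = (z ^ |S|) ^ u` is the norm of `z ^ u` up to `[S, R]`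
  obtain ⟨u, v, huv⟩ := (Nat.card_eq_fintype_card (α := S) ▸ hSr).isCoprime
  set z' : R := ⟨z, hz⟩
  have hz'r : z' ^ r = 1 := Subtype.ext (by simpa using hR z hz)
  have hz' : z' = (z' ^ Fintype.card S) ^ u := by
    calc z' = z' ^ (u * Fintype.card S + v * r : ℤ) := by rw [huv, zpow_one]
      _ = (z' ^ Fintype.card S) ^ u := by
        rw [zpow_add, mul_comm (u : ℤ), mul_comm (v : ℤ), zpow_mul, zpow_mul, zpow_natCast,
          zpow_natCast, hz'r, one_zpow, mul_one]
  have ht : (conjNorm S R (z' ^ u))⁻¹ * z' =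
      ((conjNorm S R z' * (z' ^ Fintype.card S)⁻¹) ^ u)⁻¹ := by
    calc (conjNorm S R (z' ^ u))⁻¹ * z' = (conjNorm S R z' ^ u)⁻¹ * (z' ^ Fintype.card S) ^ u := by
          rw [map_zpow, ← hz']
      _ = _ := by rw [mul_zpow, inv_zpow, mul_inv, inv_inv]
  refine ⟨conjNorm S R (z' ^ u), ⟨SetLike.coe_mem _, conjNorm_mem_centralizer _⟩,
    ((conjNorm S R (z' ^ u))⁻¹ * z' : R), ?_, by simp [z']⟩
  rw [← mem_subgroupOf, ht]
  exact inv_mem (zpow_mem (mem_subgroupOf.mpr (conjNorm_mul_inv_pow_mem_commutator z')) u)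

end CoprimeAction

theorem Subgroup.normal_of_le_center {G : Type*} [Group G] {H : Subgroup G} (h : H ≤ center G) :
    H.Normal :=
  ⟨fun x hx g => by rwa [mem_center_iff.mp (h hx) g, mul_inv_cancel_right]⟩

section CentralMod

open QuotientGroup

variable {G : Type*} [Group G]

def Subgroup.centralMod (Q A : Subgroup G) [A.Normal] : Subgroup G :=
  (Q.map (mk' A) ⊓ center (G ⧸ A)).comap (mk' A)

variable {P Q A B : Subgroup G} [A.Normal]

instance Subgroup.normal_centralMod : (Q.centralMod A).Normal :=
  have := normal_of_le_center (inf_le_right : Q.map (mk' A) ⊓ center (G ⧸ A) ≤ _)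
  normal_comap _

theorem Subgroup.le_centralMod : A ≤ Q.centralMod A := fun x hx => by
  rw [centralMod, mem_comap, mk'_apply, (eq_one_iff x).mpr hx]
  exact one_mem _

theorem Subgroup.sup_inf_centralMod : A ⊔ (Q ⊓ Q.centralMod A) = Q.centralMod A := by
  refine le_antisymm (sup_le le_centralMod inf_le_right) fun m hm => ?_
  obtain ⟨ω, hω, hωm⟩ := mem_map.mp (mem_inf.mp (mem_comap.mp hm)).1
  have hωM : ω ∈ Q.centralMod A := by rw [centralMod, mem_comap, hωm]; exact hm
  have hmω : m * ω⁻¹ ∈ A := by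
    rw [← eq_one_iff, ← mk'_apply, map_mul, map_inv, hωm, mul_inv_cancel]
  simpa using mul_mem_sup hmω (mem_inf.mpr ⟨hω, hωM⟩)

theorem inApAq_comap_mk' {p q : ℕ} (hA : ElemAbelian p A) {L : Subgroup (G ⧸ A)}
    (hL : ElemAbelian q L) : InApAq p q (L.comap (mk' A)) := by
  rw [elemAbelian_subgroup_iff] at hA hL
  refine ⟨A.subgroupOf _, inferInstance, elemAbelian_subgroup_iff.mpr ⟨?_, ?_⟩, fun u v => ?_,
    fun u => ?_⟩
  · exact fun x hx y hy => Subtype.ext (hA.1 _ (mem_subgroupOf.mp hx) _ (mem_subgroupOf.mp hy))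
  · exact fun x hx => Subtype.ext (hA.2 _ (mem_subgroupOf.mp hx))
  · have h : ((u : G) : G ⧸ A) * (v : G) = (v : G) * ((u : G) : G ⧸ A) := hL.1 _ u.2 _ v.2
    rw [mem_subgroupOf, ← eq_one_iff]
    simp [h]
  · have h : ((u : G) : G ⧸ A) ^ q = 1 := hL.2 _ u.2
    rw [mem_subgroupOf, ← eq_one_iff]
    simp [h]

theorem inApAq_centralMod {p q : ℕ} (hA : ElemAbelian p A) (hQ : ElemAbelian q Q) :
    InApAq p q (Q.centralMod A) :=
  inApAq_comap_mk' hA ((hQ.map _).mono inf_le_left)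

theorem map_mk'_sup_left : (A ⊔ B).map (mk' A) = B.map (mk' A) := by
  rw [Subgroup.map_sup, (map_eq_bot_iff A).mpr (ker_mk' A).ge, bot_sup_eq]

theorem commutator_map_mk'_eq (hKAB : ⁅P, Q⁆ ≤ A ⊔ B) (hBK : B ≤ ⁅P, Q⁆) :
    ⁅P.map (mk' A), Q.map (mk' A)⁆ = B.map (mk' A) := by
  rw [← map_commutator]
  exact le_antisymm ((map_mono hKAB).trans map_mk'_sup_left.le) (map_mono hBK)

theorem normal_map_mk' [IsMulCommutative Q] (hPQ : (P : Set G) * (Q : Set G) = Set.univ)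
    (hBQ : B ≤ Q) (hKAB : ⁅P, Q⁆ ≤ A ⊔ B) : (Q.map (mk' A)).Normal := by
  rw [← commutator_top_left_le_iff, ← map_top_of_surjective _ (mk'_surjective A),
    ← map_commutator]
  calc (⁅⊤, Q⁆ : Subgroup G).map (mk' A) ≤ (A ⊔ B).map (mk' A) :=
        map_mono ((commutator_top_left_le_of_mul_eq_univ hPQ).trans hKAB)
    _ ≤ Q.map (mk' A) := map_mk'_sup_left.trans_le (map_mono hBQ)

theorem mem_center_of_mem_centralizer [IsMulCommutative Q]
    (hPQ : (P : Set G) * (Q : Set G) = Set.univ) {c : G ⧸ A} (hcQ : c ∈ Q.map (mk' A))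
    (hcP : c ∈ centralizer (P.map (mk' A) : Set (G ⧸ A))) : c ∈ center (G ⧸ A) := by
  refine mem_center_iff.mpr fun g => ?_
  obtain ⟨g, rfl⟩ := mk'_surjective A g
  obtain ⟨a, ha, b, hb, rfl⟩ := Set.mem_mul.mp (hPQ ▸ Set.mem_univ g)
  have hb' : mk' A b * c = c * mk' A b := setLike_mul_comm (mem_map_of_mem _ hb) hcQ
  have ha' : mk' A a * c = c * mk' A a := mem_centralizer_iff.mp hcP _ (mem_map_of_mem _ ha)
  rw [map_mul, mul_assoc, hb', ← mul_assoc, ha', mul_assoc]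

variable [Finite G] {q : ℕ}

theorem disjoint_centralMod (hPQ : (P : Set G) * (Q : Set G) = Set.univ) (hQ : ElemAbelian q Q)
    (hPq : (Nat.card P).Coprime q) (hAQ : Disjoint A Q) (hBQ : B ≤ Q) (hKAB : ⁅P, Q⁆ ≤ A ⊔ B)
    (hBK : B ≤ ⁅P, Q⁆) : Disjoint (Q.centralMod A) B := by
  have := hQ.isMulCommutative_s18
  have := normal_map_mk' (A := A) hPQ hBQ hKAB
  refine disjoint_def.mpr fun {x} hxM hxB => ?_
  have hx : mk' A x = 1 := by
    refine disjoint_def.mp (disjoint_centralizer_commutator_of_coprime (S := P.map (mk' A))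
      (R := Q.map (mk' A)) (fun _ => (hQ.map _).pow_eq_one)
      (hPq.coprime_dvd_left (card_map_dvd P _))) ?_ ?_
    · exact mem_centralizer_iff.mpr fun g _ =>
        mem_center_iff.mp (mem_inf.mp (mem_comap.mp hxM)).2 g
    · exact commutator_map_mk'_eq hKAB hBK ▸ mem_map_of_mem _ hxB
  exact disjoint_def.mp hAQ ((eq_one_iff x).mp hx) (hBQ hxB)

theorem coe_subset_centralMod_mul (hPQ : (P : Set G) * (Q : Set G) = Set.univ)
    (hQ : ElemAbelian q Q) (hPq : (Nat.card P).Coprime q) (hBQ : B ≤ Q) (hKAB : ⁅P, Q⁆ ≤ A ⊔ B)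
    (hBK : B ≤ ⁅P, Q⁆) : (Q : Set G) ⊆ Q.centralMod A * B := by
  have := hQ.isMulCommutative_s18
  have := normal_map_mk' (A := A) hPQ hBQ hKAB
  intro ω hω
  obtain ⟨c, ⟨hcQ, hcP⟩, t, ht, hct⟩ := exists_centralizer_mul_commutator_eq_of_coprime
    (S := P.map (mk' A)) (R := Q.map (mk' A)) (fun _ => (hQ.map _).pow_eq_one)
    (hPq.coprime_dvd_left (card_map_dvd P _)) (mem_map_of_mem (mk' A) hω)
  obtain ⟨b, hb, rfl⟩ := commutator_map_mk'_eq hKAB hBK ▸ ht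
  have hx : mk' A (ω * b⁻¹) = c := by rw [map_mul, map_inv, ← hct, mul_inv_cancel_right]
  refine Set.mem_mul.mpr ⟨ω * b⁻¹, ?_, b, hb, inv_mul_cancel_right ω b⟩
  exact mem_comap.mpr ⟨mem_map_of_mem _ (mul_mem hω (inv_mem (hBQ hb))),
    hx ▸ mem_center_of_mem_centralizer hPQ hcQ hcP⟩

end CentralMod

section Assembly

variable {G : Type*} [Group G]

noncomputable def Subgroup.IsComplement'.prodMulEquiv {M N : Subgroup G} [hM : M.Normal]
    [hN : N.Normal] (h : IsComplement' M N) : M × N ≃* G :=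
  MulEquiv.ofBijective (M.subtype.noncommCoprod N.subtype fun m n =>
    commute_of_normal_of_disjoint M N hM hN h.disjoint m n m.2 n.2) h

theorem disjoint_centralMod_centralMod {P Q A B : Subgroup G} [A.Normal] [B.Normal]
    (hPQ : Disjoint P Q) (hAP : A ≤ P) (hBQ : B ≤ Q) (hMB : Disjoint (Q.centralMod A) B)
    (hNA : Disjoint (P.centralMod B) A) : Disjoint (Q.centralMod A) (P.centralMod B) := by
  refine disjoint_def.mpr fun {t} htM htN => ?_
  have htM' : t ∈ (A : Set G) * ((Q ⊓ Q.centralMod A : Subgroup G) : Set G) := by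
    rwa [← normal_mul, sup_inf_centralMod]
  have htN' : t ∈ ((P ⊓ P.centralMod B : Subgroup G) : Set G) * (B : Set G) := by
    rwa [← mul_normal, sup_comm, sup_inf_centralMod]
  obtain ⟨a, ha, x, hx, rfl⟩ := Set.mem_mul.mp htM'
  obtain ⟨y, hy, b, hb, hyb⟩ := Set.mem_mul.mp htN'
  have hya : y⁻¹ * a = b * x⁻¹ := by
    rw [inv_mul_eq_iff_eq_mul, ← mul_assoc, hyb, mul_inv_cancel_right]
  have hya1 : y⁻¹ * a = 1 := disjoint_def.mp hPQ (mul_mem (inv_mem (mem_inf.mp hy).1) (hAP ha))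
    (hya ▸ mul_mem (hBQ hb) (inv_mem (mem_inf.mp hx).1))
  obtain rfl : y = a := inv_mul_eq_one.mp hya1
  obtain rfl : y = 1 := disjoint_def.mp hNA (mem_inf.mp hy).2 ha
  rw [one_mul, one_mul] at hyb
  rw [one_mul]
  exact disjoint_def.mp hMB (mem_inf.mp hx).2 (hyb ▸ hb)

theorem isComplement'_centralMod_of_subset_mul {P Q A B : Subgroup G} [A.Normal] [B.Normal]
    (hPQ : IsComplement' P Q) (hAP : A ≤ P) (hBQ : B ≤ Q)
    (hMB : Disjoint (Q.centralMod A) B) (hNA : Disjoint (P.centralMod B) A)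
    (hQM : (Q : Set G) ⊆ Q.centralMod A * B) (hPN : (P : Set G) ⊆ P.centralMod B * A) :
    IsComplement' (Q.centralMod A) (P.centralMod B) := by
  have hMN := disjoint_centralMod_centralMod hPQ.disjoint hAP hBQ hMB hNA
  refine isComplement'_of_disjoint_and_mul_eq_univ hMN (Set.eq_univ_of_forall fun g => ?_)
  obtain ⟨a, ha, b, hb, rfl⟩ := Set.mem_mul.mp (hPQ.mul_eq_univ ▸ Set.mem_univ g)
  obtain ⟨x, hx, b', hb', rfl⟩ := Set.mem_mul.mp (hQM hb)
  obtain ⟨y, hy, a', ha', rfl⟩ := Set.mem_mul.mp (hPN ha)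
  have hxa : a' * x ∈ Q.centralMod A := mul_mem (le_centralMod ha') hx
  have hcomm := commute_of_normal_of_disjoint _ _ inferInstance inferInstance hMN _ _ hxa hy
  refine Set.mem_mul.mpr ⟨a' * x, hxa, y * b', mul_mem hy (le_centralMod hb'), ?_⟩
  rw [← mul_assoc, hcomm.eq]
  group

theorem isComplement'_centralMod [Finite G] {p q : ℕ} {P Q A B : Subgroup G} [A.Normal]
    [B.Normal] (hPQ : IsComplement' P Q) (hP : ElemAbelian p P) (hQ : ElemAbelian q Q)
    (hPq : (Nat.card P).Coprime q) (hQp : (Nat.card Q).Coprime p) (hA : A ≤ ⁅P, Q⁆ ⊓ P)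
    (hB : B ≤ ⁅P, Q⁆ ⊓ Q) (hK : ⁅P, Q⁆ ≤ A ⊔ B) :
    IsComplement' (Q.centralMod A) (P.centralMod B) := by
  obtain ⟨hAK, hAP⟩ := le_inf_iff.mp hA
  obtain ⟨hBK, hBQ⟩ := le_inf_iff.mp hB
  rw [commutator_comm] at hAK
  have hK' : ⁅Q, P⁆ ≤ B ⊔ A := by rwa [commutator_comm, sup_comm]
  refine isComplement'_centralMod_of_subset_mul hPQ hAP hBQ ?_ ?_ ?_ ?_
  · exact disjoint_centralMod hPQ.mul_eq_univ hQ hPq (hPQ.disjoint.mono_left hAP) hBQ hK hBK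
  · exact disjoint_centralMod hPQ.symm.mul_eq_univ hP hQp (hPQ.disjoint.symm.mono_left hBQ) hAP
      hK' hAK
  · exact coe_subset_centralMod_mul hPQ.mul_eq_univ hQ hPq hBQ hK hBK
  · exact coe_subset_centralMod_mul hPQ.symm.mul_eq_univ hP hQp hAP hK' hAK

end Assembly

theorem Sylow.card_eq_pow_of_card_eq {G : Type*} [Group G] [Finite G] {p α m : ℕ}
    [hp : Fact p.Prime] (P : Sylow p G) (h : Nat.card G = p ^ α * m) (hm : ¬ p ∣ m) :
    Nat.card P = p ^ α := by
  have hm0 : m ≠ 0 := by rintro rfl; exact hm (dvd_zero p)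
  rw [P.card_eq_multiplicity, h, Nat.factorization_mul (pow_ne_zero _ hp.out.ne_zero) hm0,
    Finsupp.add_apply, hp.out.factorization_pow, Finsupp.single_eq_same,
    Nat.factorization_eq_zero_of_not_dvd hm, add_zero]

theorem Sylow.isSylow' {G : Type*} [Group G] [Finite G] {p : ℕ} [hp : Fact p.Prime]
    (P : Sylow p G) : IsSylow' p (P : Subgroup G) :=
  ⟨P.isPGroup', ((Nat.Prime.coprime_iff_not_dvd hp.out).mpr P.not_dvd_index).symm⟩

/-- A finite group of order `p^α q^β` whose Sylow `p`- and `q`-subgroups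
are abelian of exponent dividing `p` and `q` respectively decomposes as `X × Y` with
`X ∈ 𝔄_p𝔄_q` and `Y ∈ 𝔄_q𝔄_p`. -/
theorem decomposition_in_join_variety (p q : ℕ) (hp : p.Prime) (hq : q.Prime) (hpq : p ≠ q)
    (G : Type) [Group G] [Finite G]
    (horder : ∃ α β : ℕ, Nat.card G = p ^ α * q ^ β)
    (hSylp : ∀ P : Subgroup G, IsSylow' p P → ElemAbelian p P)
    (hSylq : ∀ Q : Subgroup G, IsSylow' q Q → ElemAbelian q Q) :
    ∃ (X : Type) (_ : Group X) (Y : Type) (_ : Group Y),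
      Finite X ∧ Finite Y ∧ InApAq p q X ∧ InApAq q p Y ∧
      Nonempty (G ≃* X × Y) := by
  obtain ⟨α, β, hG⟩ := horder
  have := Fact.mk hp
  have := Fact.mk hq
  have hpq' : p.Coprime q := (Nat.coprime_primes hp hq).mpr hpq
  obtain ⟨P⟩ : Nonempty (Sylow p G) := inferInstance
  obtain ⟨Q⟩ : Nonempty (Sylow q G) := inferInstance
  have hP : Nat.card P = p ^ α :=
    P.card_eq_pow_of_card_eq hG (hp.coprime_iff_not_dvd.mp (hpq'.pow_right β))
  have hQ : Nat.card Q = q ^ β := Q.card_eq_pow_of_card_eq (hG.trans (mul_comm _ _))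
    (hq.coprime_iff_not_dvd.mp (hpq'.symm.pow_right α))
  have hPQ : IsComplement' (P : Subgroup G) Q :=
    isComplement'_of_coprime (by rw [hP, hQ, hG]) (by rw [hP, hQ]; exact hpq'.pow α β)
  have hPe := hSylp P P.isSylow'
  have hQe := hSylq Q Q.isSylow'
  have := hPe.isMulCommutative_s18
  have := hQe.isMulCommutative_s18
  have := commutator_normal_of_sup_eq_top hPQ.sup_eq_top
  have := isMulCommutative_commutator_of_mul_eq_univ hPQ.mul_eq_univ
  obtain ⟨A, B, hAn, hBn, hA, hB, hK⟩ :=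
    exists_normal_split_of_card_eq ⁅(P : Subgroup G), (Q : Subgroup G)⁆ hpq' hG P Q
  refine ⟨Q.centralMod A, inferInstance, P.centralMod B, inferInstance, inferInstance,
    inferInstance, inApAq_centralMod (hPe.mono (hA.trans inf_le_right)) hQe,
    inApAq_centralMod (hQe.mono (hB.trans inf_le_right)) hPe, ⟨MulEquiv.symm ?_⟩⟩
  exact (isComplement'_centralMod hPQ hPe hQe (hP ▸ hpq'.pow_left α)
    (hQ ▸ hpq'.symm.pow_left β) hA hB hK).prodMulEquiv
end
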